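/- Let Φ be a CPTP map on B¹(H) with Kraus operators (K_j)_{j∈J} (∑_j K_j*K_j = 1 strongly). Set K := ℓ²(J ∪ {s}) for a symbol s ∉ J. Then there exist a self-adjoint unitary U on H ⊗ K and the unit vector ψ = e_s such that Φ(ρ) = tr_K(U(ρ ⊗ |e_s⟩⟨e_s|)U) for all ρ ∈ B¹(H). -/

import Mathlib

open ContinuousLinearMap

variable {ι : Type*} [DecidableEq ι] {H : Type*} [NormedAddCommGroup H] [InnerProductSpace ℂ H]

/-- `x ↦ x ⊗ e_i`: the isometric embedding of `H` onto the `i`-th summand of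
`H ⊗ ℓ²(ι) ≅ ⊕²_ι H` (modelled as `lp (fun _ : ι => H) 2`), as a continuous linear map. -/
noncomputable def lpSingleL (i : ι) : H →L[ℂ] lp (fun _ : ι => H) 2 :=
  LinearMap.mkContinuous
    { toFun := fun x => lp.single 2 i x
      map_add' := fun x y => by
        apply lp.ext; funext j
        by_cases h : j = i
        · subst h
          simp [lp.single_apply_self, lp.coeFn_add]
        · simp [lp.single_apply_ne _ _ _ h, lp.coeFn_add]
      map_smul' := fun c x => by simp }
    1 (fun x => by
        simpa using (lp.norm_single (p := 2) (E := fun _ : ι => H) (by norm_num)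
          (fun _ => x) i).le)

/-- `(1 ⊗ ⟨e_i|)`: evaluation of the `i`-th component of `H ⊗ ℓ²(ι) ≅ ⊕²_ι H`,
as a continuous linear map. -/
noncomputable def lpProjL (i : ι) : lp (fun _ : ι => H) 2 →L[ℂ] H :=
  LinearMap.mkContinuous
    { toFun := fun f => f i
      map_add' := fun f g => by simp [lp.coeFn_add]
      map_smul' := fun c f => by simp [lp.coeFn_smul] }
    1 (fun f => by rw [one_mul]; exact lp.norm_apply_le_norm (by norm_num) f i)

/-!
Extend the Kraus family by `K_s = 0`. Then `V x = ∑_m K_m x ⊗ e_m` is an isometry (the Stinespring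
isometry) whose range is orthogonal to that of the isometry `S x = x ⊗ e_s`. Hence
`(S - V)* (S - V) = 2`, so `U = 1 - (S - V)(S - V)*` is a reflection; it exchanges `S` and `V`,
so `U (S ρ S*) U = V ρ V*`, whose diagonal blocks are `K_m ρ K_m*`.
-/

open scoped ComplexInnerProductSpace

section IsometrySwap

variable {𝕜 E F : Type*} [RCLike 𝕜] [NormedAddCommGroup E] [InnerProductSpace 𝕜 E] [CompleteSpace E]
  [NormedAddCommGroup F] [InnerProductSpace 𝕜 F] [CompleteSpace F]

noncomputable def isometrySwap (S V : E →L[𝕜] F) : F →L[𝕜] F :=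
  1 - (S - V) ∘L adjoint (S - V)

theorem isSelfAdjoint_isometrySwap (S V : E →L[𝕜] F) : IsSelfAdjoint (isometrySwap S V) := by
  rw [isSelfAdjoint_iff', isometrySwap, map_sub, adjoint_comp, adjoint_adjoint, adjoint_one]

variable {S V : E →L[𝕜] F}

theorem adjoint_comp_eq_zero_symm (hSV : adjoint S ∘L V = 0) : adjoint V ∘L S = 0 := by
  rw [← adjoint_adjoint S, ← adjoint_comp, hSV, map_zero]

theorem isometrySwap_comp_left (hS : adjoint S ∘L S = 1) (hSV : adjoint S ∘L V = 0) :
    isometrySwap S V ∘L S = V := by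
  have hW : adjoint (S - V) ∘L S = 1 := by
    rw [map_sub, sub_comp, hS, adjoint_comp_eq_zero_symm hSV, sub_zero]
  rw [isometrySwap, sub_comp, comp_assoc, hW, one_def, one_def, id_comp, comp_id, sub_sub_cancel]

theorem isometrySwap_mul_self (hS : adjoint S ∘L S = 1) (hV : adjoint V ∘L V = 1)
    (hSV : adjoint S ∘L V = 0) : isometrySwap S V * isometrySwap S V = 1 := by
  set W := S - V
  have hW : adjoint W ∘L W = (2 : 𝕜) • 1 := by
    simp only [W, map_sub, sub_comp, comp_sub, hS, hV, hSV, adjoint_comp_eq_zero_symm hSV]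
    rw [two_smul]; abel
  have hP : (W ∘L adjoint W) * (W ∘L adjoint W) = (2 : 𝕜) • (W ∘L adjoint W) := by
    rw [mul_def, comp_assoc, ← comp_assoc (adjoint W), hW, smul_comp, comp_smul, one_def, id_comp]
  rw [isometrySwap, sub_mul, mul_sub, mul_sub, hP, one_mul, mul_one, one_mul, two_smul]
  abel

theorem isometrySwap_conj (hS : adjoint S ∘L S = 1) (hSV : adjoint S ∘L V = 0) (A : E →L[𝕜] E) :
    isometrySwap S V * (S ∘L A ∘L adjoint S) * isometrySwap S V = V ∘L A ∘L adjoint V := by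
  have hSU : adjoint S ∘L isometrySwap S V = adjoint V := by
    rw [← (isSelfAdjoint_iff'.mp (isSelfAdjoint_isometrySwap S V)), ← adjoint_comp,
      isometrySwap_comp_left hS hSV]
  rw [mul_def, mul_def, ← comp_assoc, ← comp_assoc, isometrySwap_comp_left hS hSV, comp_assoc,
    comp_assoc, hSU]

end IsometrySwap

theorem lpProjL_comp_lpSingleL (i : ι) :
    lpProjL i ∘L (lpSingleL i : H →L[ℂ] lp (fun _ : ι => H) 2) = 1 :=
  ContinuousLinearMap.ext fun x => lp.single_apply_self (E := fun _ : ι => H) 2 i x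

section lp

variable [CompleteSpace H]

theorem adjoint_lpSingleL (i : ι) :
    adjoint (lpSingleL i : H →L[ℂ] lp (fun _ : ι => H) 2) = lpProjL i := by
  refine ((eq_adjoint_iff _ _).mpr fun f y => ?_).symm
  exact (lp.inner_single_right (𝕜 := ℂ) i y f).symm

theorem adjoint_lpProjL (i : ι) :
    adjoint (lpProjL i : lp (fun _ : ι => H) 2 →L[ℂ] H) = lpSingleL i := by
  rw [← adjoint_lpSingleL, adjoint_adjoint]

end lp

theorem hasSum_option_iff_of_none {α β : Type*} [AddCommMonoid α] [TopologicalSpace α]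
    {f : Option β → α} {a : α} (h : f none = 0) : HasSum f a ↔ HasSum (f ∘ some) a := by
  refine ((Option.some_injective β).hasSum_iff ?_).symm
  rintro (_ | b) hb
  · exact h
  · exact absurd (Set.mem_range_self b) hb

section Kraus

omit [DecidableEq ι]

variable [CompleteSpace H] {L : ι → H →L[ℂ] H}

theorem hasSum_inner_of_hasSum_adjoint_comp
    (hL : ∀ x, HasSum (fun i => adjoint (L i) (L i x)) x) (x y : H) :
    HasSum (fun i => ⟪L i x, L i y⟫) ⟪x, y⟫ := by
  simpa only [innerSL_apply_apply, adjoint_inner_right] using (innerSL ℂ x).hasSum (hL y)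

theorem memℓp_two_of_hasSum_adjoint_comp
    (hL : ∀ x, HasSum (fun i => adjoint (L i) (L i x)) x) (x : H) :
    Memℓp (fun i => L i x) 2 := by
  refine memℓp_gen ?_
  have := (Complex.reCLM.hasSum (hasSum_inner_of_hasSum_adjoint_comp hL x x)).summable
  simpa [inner_self_eq_norm_sq_to_K, ← Complex.ofReal_pow] using this

noncomputable def krausIsometry (L : ι → H →L[ℂ] H)
    (hL : ∀ x, HasSum (fun i => adjoint (L i) (L i x)) x) : H →ₗᵢ[ℂ] lp (fun _ : ι => H) 2 :=
  LinearMap.isometryOfInner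
    { toFun := fun x => ⟨fun i => L i x, memℓp_two_of_hasSum_adjoint_comp hL x⟩
      map_add' := fun x y => lp.ext <| funext fun i => map_add (L i) x y
      map_smul' := fun c x => lp.ext <| funext fun i => map_smul (L i) c x }
    fun x y => (lp.hasSum_inner _ _).unique (hasSum_inner_of_hasSum_adjoint_comp hL x y)

theorem lpProjL_comp_krausIsometry (hL : ∀ x, HasSum (fun i => adjoint (L i) (L i x)) x)
    (i : ι) : lpProjL i ∘L (krausIsometry L hL).toContinuousLinearMap = L i :=
  rfl

end Kraus

/-- `ℓ²(J ∪ {s})` is modelled by the index type `Option J` with `none = s`, so `H ⊗ ℓ²(J ∪ {s})`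
is `lp (fun _ : Option J => H) 2`, `ρ ⊗ |e_s⟩⟨e_s|` is `lpSingleL none ∘L ρ ∘L lpProjL none`, and
`tr_K A = ∑_m (1 ⊗ ⟨e_m|) A (1 ⊗ |e_m⟩)` is taken strongly. -/
theorem hellwig_kraus_stinespring_form
    [CompleteSpace H] {J : Type*} [DecidableEq J]
    (K : J → H →L[ℂ] H)
    (hK : ∀ x : H, HasSum (fun j => adjoint (K j) ((K j) x)) x)
    (Φ : (H →L[ℂ] H) →ₗ[ℂ] (H →L[ℂ] H))
    (hΦ : ∀ (ρ : H →L[ℂ] H) (x : H),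
      HasSum (fun j => (K j) (ρ ((adjoint (K j)) x))) (Φ ρ x)) :
    ∃ U : lp (fun _ : Option J => H) 2 →L[ℂ] lp (fun _ : Option J => H) 2,
      star U = U ∧ U * U = 1 ∧
      ∀ (ρ : H →L[ℂ] H) (x : H),
        HasSum
          (fun m : Option J =>
            lpProjL m
              ((U * (lpSingleL (none : Option J) ∘L ρ ∘L lpProjL (none : Option J)) * U)
                (lpSingleL m x)))
          (Φ ρ x) := by
  set L : Option J → H →L[ℂ] H := fun m => m.elim 0 K
  have hL : ∀ x, HasSum (fun m => adjoint (L m) (L m x)) x := fun x =>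
    (hasSum_option_iff_of_none (by simp [L])).2 (hK x)
  set V := (krausIsometry L hL).toContinuousLinearMap
  set S : H →L[ℂ] lp (fun _ : Option J => H) 2 := lpSingleL none
  have hS : adjoint S ∘L S = 1 := by rw [adjoint_lpSingleL, lpProjL_comp_lpSingleL]
  have hSV : adjoint S ∘L V = 0 := by rw [adjoint_lpSingleL, lpProjL_comp_krausIsometry]; rfl
  refine ⟨isometrySwap S V, (isSelfAdjoint_isometrySwap S V).star_eq,
    isometrySwap_mul_self hS (LinearIsometry.adjoint_comp_self _) hSV, fun ρ x => ?_⟩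
  have hsummand : ∀ m, lpProjL m ((V ∘L ρ ∘L adjoint V) (lpSingleL m x)) =
      L m (ρ (adjoint (L m) x)) := fun m => by
    rw [← lpProjL_comp_krausIsometry hL m, adjoint_comp, adjoint_lpProjL]
    rfl
  rw [← adjoint_lpSingleL (none : Option J), isometrySwap_conj hS hSV]
  simp only [hsummand]
  exact (hasSum_option_iff_of_none (by simp [L])).2 (hΦ ρ x)
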